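/- arXiv:2009.14763 — 8 statements merged into one kernel-verified Lean document; each statement's English description precedes it below -/
import Mathlib

section
/- Let A be a finite set with |A| = n − 1, let H' ⊆ A with |A ∖ H'| ≤ f, and let d : A → ℝ. Let F ⊆ A with |F| = n − f − 1 be such that d(j) ≤ d(k) for all j ∈ F and k ∈ A ∖ F (F consists of the n − f − 1 smallest values of d). Then there exists an injection σ : (F ∖ H') → (H' ∖ F) such that d(k) ≤ d(σ(k)) for every k ∈ F ∖ H'. -/
open Finset

/-! Since at most `f` elements of `A` lie outside `H'`, we get `#F = #A - f ≤ #H'`, hence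
`#(F \ H') ≤ #(H' \ F)` and `F \ H'` injects into `H' \ F`. Every element of `H' \ F` lies in
`A \ F`, so the filter hypothesis gives the inequality for any such injection. -/

theorem Finset.exists_injOn_mapsTo_of_card_le {α : Type*} {s t : Finset α} (h : #s ≤ #t) :
    ∃ σ : α → α, Set.InjOn σ s ∧ Set.MapsTo σ s t := by
  rcases s.eq_empty_or_nonempty with rfl | ⟨a, -⟩
  · exact ⟨id, by simp, by simp [Set.MapsTo]⟩
  · have : Nonempty α := ⟨a⟩
    obtain ⟨σ, hmaps, hinj⟩ := s.finite_toSet.exists_injOn_of_encard_le (t := (t : Set α))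
      (by simpa using h)
    exact ⟨σ, hinj, hmaps⟩

theorem Finset.card_sub_le_card_of_card_sdiff_le {α : Type*} [DecidableEq α] {s t : Finset α}
    {f : ℕ} (hts : t ⊆ s) (hf : #(s \ t) ≤ f) : #s - f ≤ #t := by
  have := card_sdiff_add_card_eq_card hts
  omega

theorem ce_filter_injection_general {ι : Type*} [DecidableEq ι] (n f : ℕ)
    (A H' F : Finset ι) (hA : A.card = n - 1)
    (hH'A : H' ⊆ A) (hfaulty : (A \ H').card ≤ f)
    (d : ι → ℝ) (hFcard : F.card = n - f - 1)
    (hfilter : ∀ j ∈ F, ∀ k ∈ A \ F, d j ≤ d k) :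
    ∃ σ : ι → ι, Set.InjOn σ ↑(F \ H') ∧
      ∀ k ∈ F \ H', σ k ∈ H' \ F ∧ d k ≤ d (σ k) := by
  have hcard : #F ≤ #H' := by
    have := card_sub_le_card_of_card_sdiff_le hH'A hfaulty
    omega
  obtain ⟨σ, hinj, hmaps⟩ := exists_injOn_mapsTo_of_card_le (card_sdiff_le_card_sdiff_iff.2 hcard)
  refine ⟨σ, hinj, fun k hk => ⟨hmaps hk, hfilter k (mem_sdiff.1 hk).1 _ ?_⟩⟩
  exact sdiff_subset_sdiff hH'A le_rfl (hmaps hk)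

/-- pigeonhole property of the Comparative Elimination filter.
For each surviving element of `F` outside `H'` there is a distinct eliminated
element of `H'` with at least as large a value of `d`. -/
theorem ce_filter_injection {ι : Type*} [DecidableEq ι] (n f : ℕ)
    (A H' F : Finset ι) (hA : A.card = n - 1)
    (hH'A : H' ⊆ A) (hfaulty : (A \ H').card ≤ f)
    (d : ι → ℝ) (hFA : F ⊆ A) (hFcard : F.card = n - f - 1)
    (hfilter : ∀ j ∈ F, ∀ k ∈ A \ F, d j ≤ d k) :
    ∃ σ : ι → ι, Set.InjOn σ ↑(F \ H') ∧
      ∀ k ∈ F \ H', σ k ∈ H' \ F ∧ d k ≤ d (σ k) :=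
  ce_filter_injection_general n f A H' F hA hH'A hfaulty d hFcard hfilter
end

section
/- Let A be a finite set with |A| = n − 1, let H' ⊆ A with |A ∖ H'| ≤ f, let x ∈ ℝ^d, let m : A → ℝ^d, and let F ⊆ A with |F| = n − f − 1 be such that ‖x − m(j)‖ ≤ ‖x − m(k)‖ for all j ∈ F and k ∈ A ∖ F. Define e = Σ_{j ∈ F∖H'} (x − m(j)) − Σ_{j ∈ H'∖F} (x − m(j)). Then ‖e‖ ≤ 2 Σ_{j ∈ H'∖F} ‖x − m(j)‖. -/
open Finset

/-! The filter keeps the `n - f - 1` closest messages while at least `n - f - 1` agents are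
non-faulty, so it discards at least as many non-faulty agents as it retains faulty ones, and each
retained faulty message is at least as close to `x` as any discarded non-faulty one. Hence the
retained faulty terms weigh no more than the discarded non-faulty ones, and the triangle
inequality gives the factor `2`. -/

theorem Finset.sum_le_sum_of_card_le_of_forall_le {ι M : Type*} [AddCommMonoid M] [LinearOrder M]
    [IsOrderedAddMonoid M] {s t : Finset ι} {g : ι → M} (hcard : #s ≤ #t)
    (hg : ∀ k ∈ t, 0 ≤ g k) (hle : ∀ j ∈ s, ∀ k ∈ t, g j ≤ g k) :
    ∑ j ∈ s, g j ≤ ∑ k ∈ t, g k := by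
  rcases t.eq_empty_or_nonempty with rfl | ht
  · simp [card_eq_zero.1 (Nat.le_zero.1 hcard)]
  obtain ⟨k₀, hk₀, hk₀_min⟩ := exists_min_image t g ht
  calc ∑ j ∈ s, g j ≤ #s • g k₀ := sum_le_card_nsmul _ _ _ fun j hj => hle j hj k₀ hk₀
    _ ≤ #t • g k₀ := nsmul_le_nsmul_left (hg k₀ hk₀) hcard
    _ ≤ ∑ k ∈ t, g k := card_nsmul_le_sum _ _ _ hk₀_min

theorem norm_sum_sub_sum_le_two_mul {ι E : Type*} [SeminormedAddCommGroup E] {s t : Finset ι}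
    {v : ι → E} (h : ∑ j ∈ s, ‖v j‖ ≤ ∑ j ∈ t, ‖v j‖) :
    ‖∑ j ∈ s, v j - ∑ j ∈ t, v j‖ ≤ 2 * ∑ j ∈ t, ‖v j‖ :=
  calc ‖∑ j ∈ s, v j - ∑ j ∈ t, v j‖ ≤ ‖∑ j ∈ s, v j‖ + ‖∑ j ∈ t, v j‖ := norm_sub_le _ _
    _ ≤ ∑ j ∈ s, ‖v j‖ + ∑ j ∈ t, ‖v j‖ := add_le_add (norm_sum_le _ _) (norm_sum_le _ _)
    _ ≤ 2 * ∑ j ∈ t, ‖v j‖ := by linarith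

theorem ce_filter_error_bound_general {d n f : ℕ} {ι : Type*} [DecidableEq ι]
    (A H' F : Finset ι) (hA : A.card = n - 1)
    (hH'A : H' ⊆ A) (hfaulty : (A \ H').card ≤ f)
    (x : EuclideanSpace ℝ (Fin d)) (m : ι → EuclideanSpace ℝ (Fin d))
    (hFcard : F.card = n - f - 1)
    (hfilter : ∀ j ∈ F, ∀ k ∈ A \ F, ‖x - m j‖ ≤ ‖x - m k‖) :
    ‖(∑ j ∈ F \ H', (x - m j)) - ∑ j ∈ H' \ F, (x - m j)‖
      ≤ 2 * ∑ j ∈ H' \ F, ‖x - m j‖ := by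
  have hF_le_H' : #F ≤ #H' := by
    have := card_le_card_sdiff_add_card (s := A) (t := H')
    omega
  have hcard : #(F \ H') ≤ #(H' \ F) := card_sdiff_le_card_sdiff_iff.2 hF_le_H'
  refine norm_sum_sub_sum_le_two_mul <|
    sum_le_sum_of_card_le_of_forall_le hcard (fun _ _ => norm_nonneg _) fun j hj k hk => ?_
  exact hfilter j (mem_sdiff.1 hj).1 k (sdiff_subset_sdiff hH'A le_rfl hk)

/-- bound on the perturbation term `e` of the Comparative
Elimination filter: `‖e‖ ≤ 2 Σ_{j ∈ H'∖F} ‖x − m(j)‖`. -/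
theorem ce_filter_error_bound {d n f : ℕ} {ι : Type*} [DecidableEq ι]
    (A H' F : Finset ι) (hA : A.card = n - 1)
    (hH'A : H' ⊆ A) (hfaulty : (A \ H').card ≤ f)
    (x : EuclideanSpace ℝ (Fin d)) (m : ι → EuclideanSpace ℝ (Fin d))
    (hFA : F ⊆ A) (hFcard : F.card = n - f - 1)
    (hfilter : ∀ j ∈ F, ∀ k ∈ A \ F, ‖x - m j‖ ≤ ‖x - m k‖) :
    ‖(∑ j ∈ F \ H', (x - m j)) - ∑ j ∈ H' \ F, (x - m j)‖
      ≤ 2 * ∑ j ∈ H' \ F, ‖x - m j‖ :=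
  ce_filter_error_bound_general A H' F hA hH'A hfaulty x m hFcard hfilter
end

section
/- Let x, x* ∈ ℝ^d, let J be a finite index set with points (x_j)_{j∈J} in ℝ^d, let E ⊆ J, and let e ∈ ℝ^d satisfy ‖e‖ ≤ 2 Σ_{j∈E} ‖x − x_j‖. Then (1/2) Σ_{j∈J} ‖x − x_j‖² + ⟨x − x*, e⟩ ≥ (1/2) Σ_{j∈J∖E} ‖x − x_j‖² − 2|E| · ‖x − x*‖². -/
open Finset
open scoped RealInnerProductSpace

section

variable {ι F : Type*} [NormedAddCommGroup F] [InnerProductSpace ℝ F]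

/-- Cauchy–Schwarz, then `2 ‖u‖ aⱼ ≤ 2 ‖u‖² + aⱼ² / 2` termwise. -/
theorem neg_le_inner_of_norm_le_two_mul_sum {s : Finset ι} {a : ι → ℝ} {u e : F}
    (he : ‖e‖ ≤ 2 * ∑ j ∈ s, a j) :
    -(2 * (#s : ℝ) * ‖u‖ ^ 2 + (1 / 2) * ∑ j ∈ s, a j ^ 2) ≤ ⟪u, e⟫ := by
  have young : ∀ j ∈ s, 2 * ‖u‖ * a j ≤ 2 * ‖u‖ ^ 2 + (1 / 2) * a j ^ 2 := fun j _ => by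
    nlinarith [sq_nonneg (2 * ‖u‖ - a j)]
  have hsum : ‖u‖ * ‖e‖ ≤ 2 * (#s : ℝ) * ‖u‖ ^ 2 + (1 / 2) * ∑ j ∈ s, a j ^ 2 :=
    calc ‖u‖ * ‖e‖ ≤ ‖u‖ * (2 * ∑ j ∈ s, a j) := mul_le_mul_of_nonneg_left he (norm_nonneg u)
      _ = ∑ j ∈ s, 2 * ‖u‖ * a j := by rw [mul_sum, mul_sum]; exact sum_congr rfl fun j _ => by ring
      _ ≤ ∑ j ∈ s, (2 * ‖u‖ ^ 2 + (1 / 2) * a j ^ 2) := sum_le_sum young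
      _ = 2 * (#s : ℝ) * ‖u‖ ^ 2 + (1 / 2) * ∑ j ∈ s, a j ^ 2 := by
        rw [sum_add_distrib, sum_const, nsmul_eq_mul, mul_sum]; ring
  linarith [neg_abs_le ⟪u, e⟫, abs_real_inner_le_norm u e]

end

/-- lower bound on `(1/2) Σ_{j∈J} ‖x − x_j‖² + ⟨x − x*, e⟩` when
`‖e‖ ≤ 2 Σ_{j∈E} ‖x − x_j‖`. -/
theorem S_lower_bound {d : ℕ} {ι : Type*} [DecidableEq ι]
    (J E : Finset ι) (hEJ : E ⊆ J)
    (x xs : EuclideanSpace ℝ (Fin d)) (xj : ι → EuclideanSpace ℝ (Fin d))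
    (e : EuclideanSpace ℝ (Fin d))
    (he : ‖e‖ ≤ 2 * ∑ j ∈ E, ‖x - xj j‖) :
    (1 / 2) * ∑ j ∈ J, ‖x - xj j‖ ^ 2 + ⟪x - xs, e⟫
      ≥ (1 / 2) * ∑ j ∈ J \ E, ‖x - xj j‖ ^ 2 - 2 * (E.card : ℝ) * ‖x - xs‖ ^ 2 := by
  have hsplit := sum_sdiff hEJ (f := fun j => ‖x - xj j‖ ^ 2)
  have hinner := neg_le_inner_of_norm_le_two_mul_sum (u := x - xs) he
  linarith
end

section
/- Let H be a finite set of differentiable functions indexed by a finite set H with Q_j : ℝ^d → ℝ, let x* ∈ ℝ^d satisfy ∇Q_j(x*) = 0 for all j ∈ H, and let n > f ≥ 0 be integers with |H| ≥ n − f. Assume: (i) Σ_{j∈H} ⟨x − x*, ∇Q_j(x)⟩ ≥ λ|H| ‖x − x*‖² for all x ∈ ℝ^d; (ii) each ∇Q_j is μ-Lipschitz, so in particular ‖∇Q_j(x)‖ ≤ μ‖x − x*‖ for all x; (iii) λ(n − f) ≥ μf with λ, μ > 0. Then for every S ⊆ H with |H ∖ S| ≤ f and |S| ≤ n − f, and every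 x ∈ ℝ^d: Σ_{j∈S} ‖∇Q_j(x)‖² ≥ ((λ(n−f) − μf)² / (n − f)) · ‖x − x*‖². -/
open Finset
open scoped RealInnerProductSpace

/-!
Write `v = x - x*` and `g_j = ∇Q_j(x)`. Strong convexity bounds `∑_{j ∈ H} ⟪v, g_j⟫` below by
`λ (n - f) ‖v‖²`, while each of the at most `f` agents of `H ∖ S` contributes at most
`‖v‖ ‖g_j‖ ≤ μ ‖v‖²`, since `g_j` vanishes at `x*`. Hence `⟪v, ∑_{j ∈ S} g_j⟫ ≥ c ‖v‖²` with
`c = λ (n - f) - μ f ≥ 0`, and Cauchy–Schwarz, first in `ℝ^d` and then over the at most `n - f`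
summands, turns this into `∑_{j ∈ S} ‖g_j‖² ≥ c² / (n - f) · ‖v‖²`.
-/

lemma norm_le_of_lipschitz_of_eq_zero {E F : Type*} [SeminormedAddCommGroup E]
    [SeminormedAddCommGroup F] {G : E → F} {mu : ℝ} {x₀ : E} (hG₀ : G x₀ = 0)
    (hG : ∀ x y, ‖G x - G y‖ ≤ mu * ‖x - y‖) (x : E) : ‖G x‖ ≤ mu * ‖x - x₀‖ := by
  simpa [hG₀] using hG x x₀

lemma norm_sum_sq_le_card_mul_sum_norm_sq {E ι : Type*} [SeminormedAddCommGroup E]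
    (S : Finset ι) (g : ι → E) : ‖∑ j ∈ S, g j‖ ^ 2 ≤ #S * ∑ j ∈ S, ‖g j‖ ^ 2 :=
  (pow_le_pow_left₀ (norm_nonneg _) (norm_sum_le S g) 2).trans (sq_sum_le_card_mul_sum_sq ..)

section InnerProductSpace

variable {E ι : Type*} [NormedAddCommGroup E] [InnerProductSpace ℝ E]

lemma sum_inner_le_card_mul (T : Finset ι) (g : ι → E) (v : E) {mu : ℝ}
    (hg : ∀ j ∈ T, ‖g j‖ ≤ mu * ‖v‖) : ∑ j ∈ T, ⟪v, g j⟫ ≤ #T * (mu * ‖v‖ ^ 2) := by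
  calc ∑ j ∈ T, ⟪v, g j⟫ ≤ ∑ _j ∈ T, mu * ‖v‖ ^ 2 := by
        refine sum_le_sum fun j hj => (real_inner_le_norm _ _).trans ?_
        exact (mul_le_mul_of_nonneg_left (hg j hj) (norm_nonneg v)).trans_eq (by ring)
    _ = #T * (mu * ‖v‖ ^ 2) := by rw [sum_const, nsmul_eq_mul]

lemma mul_sq_le_sum_inner_of_subset [DecidableEq ι] {H S : Finset ι} (hSH : S ⊆ H)
    (g : ι → E) (v : E) {lam mu m f : ℝ} (hlam : 0 ≤ lam) (hmu : 0 ≤ mu)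
    (hm : m ≤ #H) (hf : (#(H \ S) : ℝ) ≤ f)
    (hH : lam * #H * ‖v‖ ^ 2 ≤ ∑ j ∈ H, ⟪v, g j⟫)
    (hg : ∀ j ∈ H \ S, ‖g j‖ ≤ mu * ‖v‖) :
    (lam * m - mu * f) * ‖v‖ ^ 2 ≤ ∑ j ∈ S, ⟪v, g j⟫ := by
  have hsplit := sum_sdiff hSH (f := fun j => ⟪v, g j⟫)
  have hout := sum_inner_le_card_mul (H \ S) g v hg
  have : lam * m * ‖v‖ ^ 2 ≤ lam * #H * ‖v‖ ^ 2 := by gcongr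
  have : #(H \ S) * (mu * ‖v‖ ^ 2) ≤ f * (mu * ‖v‖ ^ 2) := by gcongr
  linarith

lemma div_mul_sq_le_sum_norm_sq (S : Finset ι) (g : ι → E) (v : E) {c m : ℝ} (hc : 0 ≤ c)
    (hm : 0 < m) (hS : (#S : ℝ) ≤ m) (h : c * ‖v‖ ^ 2 ≤ ∑ j ∈ S, ⟪v, g j⟫) :
    c ^ 2 / m * ‖v‖ ^ 2 ≤ ∑ j ∈ S, ‖g j‖ ^ 2 := by
  set s := ‖∑ j ∈ S, g j‖
  have hcv : c * ‖v‖ ≤ s := by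
    rcases (norm_nonneg v).eq_or_lt with hv | hv
    · simp [← hv, s]
    · have : ‖v‖ * (c * ‖v‖) ≤ ‖v‖ * s := by
        calc ‖v‖ * (c * ‖v‖) = c * ‖v‖ ^ 2 := by ring
          _ ≤ ⟪v, ∑ j ∈ S, g j⟫ := by rwa [inner_sum]
          _ ≤ ‖v‖ * s := real_inner_le_norm _ _
      exact le_of_mul_le_mul_left this hv
  have hsq : (c * ‖v‖) ^ 2 ≤ m * ∑ j ∈ S, ‖g j‖ ^ 2 :=
    calc (c * ‖v‖) ^ 2 ≤ s ^ 2 := pow_le_pow_left₀ (by positivity) hcv 2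
      _ ≤ #S * ∑ j ∈ S, ‖g j‖ ^ 2 := norm_sum_sq_le_card_mul_sum_norm_sq S g
      _ ≤ m * ∑ j ∈ S, ‖g j‖ ^ 2 := by gcongr
  rw [div_mul_eq_mul_div, div_le_iff₀ hm]
  linarith

end InnerProductSpace

theorem sum_sq_grad_lower_bound_general {d n f : ℕ} {ι : Type*} [DecidableEq ι]
    (hnf : f < n) (H : Finset ι) (hH : n - f ≤ H.card)
    (Q : ι → EuclideanSpace ℝ (Fin d) → ℝ)
    (xs : EuclideanSpace ℝ (Fin d))
    (hgrad0 : ∀ j ∈ H, gradient (Q j) xs = 0)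
    (lam mu : ℝ) (hlam : 0 < lam) (hmu : 0 < mu)
    (hsc : ∀ x : EuclideanSpace ℝ (Fin d),
      ∑ j ∈ H, ⟪x - xs, gradient (Q j) x⟫ ≥ lam * (H.card : ℝ) * ‖x - xs‖ ^ 2)
    (hlip : ∀ j ∈ H, ∀ x y : EuclideanSpace ℝ (Fin d),
      ‖gradient (Q j) x - gradient (Q j) y‖ ≤ mu * ‖x - y‖)
    (hmargin : lam * ((n : ℝ) - (f : ℝ)) ≥ mu * (f : ℝ)) :
    ∀ S ⊆ H, (H \ S).card ≤ f → S.card ≤ n - f →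
      ∀ x : EuclideanSpace ℝ (Fin d),
        ∑ j ∈ S, ‖gradient (Q j) x‖ ^ 2
          ≥ (lam * ((n : ℝ) - (f : ℝ)) - mu * (f : ℝ)) ^ 2 / ((n : ℝ) - (f : ℝ))
              * ‖x - xs‖ ^ 2 := by
  intro S hSH hHS hS x
  have hcast : ((n - f : ℕ) : ℝ) = n - f := Nat.cast_sub hnf.le
  have hpos : (0 : ℝ) < n - f := by rw [← hcast]; exact_mod_cast Nat.sub_pos_of_lt hnf
  have hm : (n - f : ℝ) ≤ #H := by rw [← hcast]; exact_mod_cast hH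
  have hS' : (#S : ℝ) ≤ n - f := by rw [← hcast]; exact_mod_cast hS
  have hinner := mul_sq_le_sum_inner_of_subset hSH (fun j => gradient (Q j) x) (x - xs)
    hlam.le hmu.le hm (f := f) (by exact_mod_cast hHS) (hsc x) fun j hj =>
      norm_le_of_lipschitz_of_eq_zero (hgrad0 j (sdiff_subset hj)) (hlip j (sdiff_subset hj)) x
  exact div_mul_sq_le_sum_norm_sq S _ _ (sub_nonneg.mpr hmargin) hpos hS' hinner

/-- lower bound on the aggregate squared gradient norms over any
subset `S ⊆ H` with `|H∖S| ≤ f` and `|S| ≤ n − f`. -/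
theorem sum_sq_grad_lower_bound {d n f : ℕ} {ι : Type*} [DecidableEq ι]
    (hnf : f < n) (H : Finset ι) (hH : n - f ≤ H.card)
    (Q : ι → EuclideanSpace ℝ (Fin d) → ℝ)
    (hdiff : ∀ j ∈ H, Differentiable ℝ (Q j))
    (xs : EuclideanSpace ℝ (Fin d))
    (hgrad0 : ∀ j ∈ H, gradient (Q j) xs = 0)
    (lam mu : ℝ) (hlam : 0 < lam) (hmu : 0 < mu)
    (hsc : ∀ x : EuclideanSpace ℝ (Fin d),
      ∑ j ∈ H, ⟪x - xs, gradient (Q j) x⟫ ≥ lam * (H.card : ℝ) * ‖x - xs‖ ^ 2)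
    (hlip : ∀ j ∈ H, ∀ x y : EuclideanSpace ℝ (Fin d),
      ‖gradient (Q j) x - gradient (Q j) y‖ ≤ mu * ‖x - y‖)
    (hmargin : lam * ((n : ℝ) - (f : ℝ)) ≥ mu * (f : ℝ)) :
    ∀ S ⊆ H, (H \ S).card ≤ f → S.card ≤ n - f →
      ∀ x : EuclideanSpace ℝ (Fin d),
        ∑ j ∈ S, ‖gradient (Q j) x‖ ^ 2
          ≥ (lam * ((n : ℝ) - (f : ℝ)) - mu * (f : ℝ)) ^ 2 / ((n : ℝ) - (f : ℝ))
              * ‖x - xs‖ ^ 2 :=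
  sum_sq_grad_lower_bound_general hnf H hH Q xs hgrad0 lam mu hlam hmu hsc hlip hmargin
end

section
/- Let n > f ≥ 0 be integers, V a set of n agents, H ⊆ V with |H| ≥ n − f, and for each i ∈ H let Q_i : ℝ^d → ℝ be convex and differentiable with μ-Lipschitz gradient. Assume the average Q_H(x) = (1/|H|)Σ_{i∈H}Q_i(x) is λ-strongly convex with 0 < λ ≤ μ, that x* ∈ ℝ^d satisfies ∇Q_i(x*) = 0 for all i ∈ H, and that λ(n − f) − μf > 0. Suppose for each i ∈ H we are given x_i ∈ argmin_x Q_i(x), vectors m(i,j) ∈ ℝ^d for j ∈ V∖{i} with m(i,j) = x_j for j ∈ H∖{i}, and a set F_i ⊆ V∖{i} with |F_i| = n − f − 1 such that ‖x_i − m(i,j)‖ ≤ ‖x_i − m(i,k)‖ for all j ∈ F_i and k ∈ (V∖{i})∖F_i. Define φ_i = ⟨x_i − x*, Σ_{j∈F_i}(x_i − m(i,j))⟩ and β = (λ(n−f) − μf)² / (2μ²(n−f)) − 2f. Then Σ_{i∈H} φ_i ≥ β · Σ_{i∈H} ‖x_i − x*‖². -/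
/-!
Fix a non-faulty agent `i` and split the agents other than `i` into the non-faulty ones `A` and
the faulty ones `B` kept by its filter, and the non-faulty ones `O` it discards. Strong convexity
of `Q_H` at `x_i`, with `∇Q_j(x_j) = 0` for `j ∈ A` and `∇Q_j(x*) = 0` for `j ∈ O`, gives
`(λ(n-f) - μf) ‖x_i - x*‖ ≤ μ Σ_{j ∈ A} ‖x_i - x_j‖`, hence by Cauchy–Schwarz a lower bound on
`Σ_{j ∈ A} ‖x_i - x_j‖²`. Polarization turns the `A`-part of `φ_i` into exactly these squared
distances, up to `‖x_i - x*‖²` and `‖x_j - x*‖²` terms. Since `|B| ≤ |O|`, the filter matches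
each kept faulty value with a discarded non-faulty `x_k` at least as far from `x_i`, so each
`B`-term is at least `-‖x_i - x*‖ ‖x_i - x_k‖ ≥ -(3/2 ‖x_i - x*‖² + ‖x_k - x*‖²/2)`. Per agent
the `‖x_j - x*‖²` terms add up to at most `V/2`, which cancels against `|H|/2 · ‖x_i - x*‖²`
after summing over `i`.
-/

open Finset
open scoped RealInnerProductSpace

theorem sq_mul_le_sq_of_mul_sq_le_mul {M c r S : ℝ} (hM : 0 ≤ M) (hMc : M ≤ c) (hr : 0 ≤ r)
    (h : c * r ^ 2 ≤ r * S) : (M * r) ^ 2 ≤ S ^ 2 := by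
  rcases hr.eq_or_lt with rfl | hr
  · simp [sq_nonneg]
  have hMS : M * r ≤ S := by nlinarith
  exact pow_le_pow_left₀ (by positivity) hMS 2

theorem Finset.sum_le_sum_of_forall_le_of_card_eq {ι κ M : Type*} [AddCommMonoid M]
    [LinearOrder M] [IsOrderedAddMonoid M] {s : Finset ι} {t : Finset κ} {g : ι → M} {h : κ → M}
    (hst : s.card = t.card) (hgh : ∀ i ∈ s, ∀ j ∈ t, g i ≤ h j) :
    ∑ i ∈ s, g i ≤ ∑ j ∈ t, h j := by
  rcases s.eq_empty_or_nonempty with rfl | hs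
  · rw [card_empty, eq_comm, card_eq_zero] at hst
    simp [hst]
  calc ∑ i ∈ s, g i ≤ s.card • s.sup' hs g := sum_le_card_nsmul s g _ fun i hi => le_sup' g hi
    _ ≤ ∑ j ∈ t, h j :=
        hst ▸ card_nsmul_le_sum t h _ fun j hj => sup'_le hs g fun i hi => hgh i hi j hj

theorem norm_sub_mul_norm_sub_le {E : Type*} [SeminormedAddCommGroup E] (a b c : E) :
    ‖a - c‖ * ‖a - b‖ ≤ 3 / 2 * ‖a - c‖ ^ 2 + ‖b - c‖ ^ 2 / 2 := by
  have htri : ‖a - b‖ ≤ ‖a - c‖ + ‖b - c‖ := by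
    simpa using norm_sub_le (a - c) (b - c)
  nlinarith [norm_nonneg (a - c), sq_nonneg (‖a - c‖ - ‖b - c‖)]

section FilterCard

variable {ι : Type*} [DecidableEq ι] {V H F : Finset ι} {i : ι}

theorem card_inter_add_card_erase_sdiff (hi : i ∈ H) (hiF : i ∉ F) :
    (F ∩ H).card + (H.erase i \ F).card + 1 = H.card := by
  rw [← card_erase_add_one hi, ← card_inter_add_card_sdiff (H.erase i) F, erase_inter_comm,
    erase_eq_of_notMem hiF, inter_comm]

theorem card_sdiff_add_card_le (hHV : H ⊆ V) (hFV : F ⊆ V) : (F \ H).card + H.card ≤ V.card :=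
  card_sdiff_add_card F H ▸ card_le_card (union_subset hFV hHV)

end FilterCard

section InnerProduct

variable {E : Type*} [NormedAddCommGroup E] [InnerProductSpace ℝ E]

theorem real_inner_sub_sub_eq (a b c : E) :
    ⟪a - c, a - b⟫ = (‖a - c‖ ^ 2 + ‖a - b‖ ^ 2 - ‖b - c‖ ^ 2) / 2 := by
  rw [real_inner_eq_norm_mul_self_add_norm_mul_self_sub_norm_sub_mul_self_div_two,
    sub_sub_sub_cancel_left]
  ring

theorem real_inner_le_mul_norm_sub_of_lipschitz {g : E → E} {mu : ℝ}
    (hlip : ∀ x y, ‖g x - g y‖ ≤ mu * ‖x - y‖) {z : E} (hz : g z = 0) (u y : E) :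
    ⟪u, g y⟫ ≤ mu * ‖u‖ * ‖y - z‖ :=
  calc ⟪u, g y⟫ ≤ ‖u‖ * ‖g y‖ := real_inner_le_norm _ _
    _ ≤ ‖u‖ * (mu * ‖y - z‖) := by
        gcongr
        simpa [hz] using hlip y z
    _ = mu * ‖u‖ * ‖y - z‖ := by ring

theorem neg_le_sum_inner_of_forall_norm_le {ι : Type*} {B O : Finset ι} (hBO : B.card ≤ O.card)
    {a c : E} {m x : ι → E} (hmx : ∀ j ∈ B, ∀ k ∈ O, ‖a - m j‖ ≤ ‖a - x k‖) :
    -(3 / 2 * B.card * ‖a - c‖ ^ 2 + (∑ k ∈ O, ‖x k - c‖ ^ 2) / 2)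
      ≤ ∑ j ∈ B, ⟪a - c, a - m j⟫ := by
  obtain ⟨K, hKO, hK⟩ := exists_subset_card_eq hBO
  calc -(3 / 2 * B.card * ‖a - c‖ ^ 2 + (∑ k ∈ O, ‖x k - c‖ ^ 2) / 2)
      ≤ -∑ k ∈ K, (3 / 2 * ‖a - c‖ ^ 2 + ‖x k - c‖ ^ 2 / 2) := by
        have hsub : ∑ k ∈ K, ‖x k - c‖ ^ 2 ≤ ∑ k ∈ O, ‖x k - c‖ ^ 2 :=
          sum_le_sum_of_subset_of_nonneg hKO fun k _ _ => by positivity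
        rw [sum_add_distrib, sum_const, hK, nsmul_eq_mul, ← sum_div]
        linarith
    _ ≤ -∑ k ∈ K, ‖a - c‖ * ‖a - x k‖ :=
        neg_le_neg (sum_le_sum fun k _ => norm_sub_mul_norm_sub_le a (x k) c)
    _ ≤ -∑ j ∈ B, ‖a - c‖ * ‖a - m j‖ :=
        neg_le_neg (sum_le_sum_of_forall_le_of_card_eq hK.symm fun j hj k hk =>
          mul_le_mul_of_nonneg_left (hmx j hj k (hKO hk)) (norm_nonneg _))
    _ ≤ ∑ j ∈ B, ⟪a - c, a - m j⟫ := by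
        rw [← sum_neg_distrib]
        exact sum_le_sum fun j _ => neg_le_of_abs_le (abs_real_inner_le_norm _ _)

variable [CompleteSpace E]

theorem IsLocalMin.gradient_eq_zero {g : E → ℝ} {a : E} (h : IsLocalMin g a) :
    gradient g a = 0 := by
  rw [gradient, h.fderiv_eq_zero, map_zero]

theorem gradient_const_mul_sum {ι : Type*} (s : Finset ι) {Q : ι → E → ℝ} {y : E}
    (hd : ∀ i ∈ s, DifferentiableAt ℝ (Q i) y) (c : ℝ) :
    gradient (fun z => c * ∑ i ∈ s, Q i z) y = c • ∑ i ∈ s, gradient (Q i) y := by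
  have h : HasFDerivAt (fun z => c * ∑ i ∈ s, Q i z) (c • ∑ i ∈ s, fderiv ℝ (Q i) y) y :=
    (HasFDerivAt.fun_sum fun i hi => (hd i hi).hasFDerivAt).const_mul c
  rw [gradient, h.fderiv, map_smul, map_sum]
  rfl

theorem mul_card_mul_sq_le_sum_inner_gradient {ι : Type*} {s : Finset ι} {Q : ι → E → ℝ}
    (hd : ∀ i ∈ s, Differentiable ℝ (Q i)) {lam : ℝ} {y xs : E}
    (hsc : ⟪y - xs, gradient (fun z => (s.card : ℝ)⁻¹ * ∑ i ∈ s, Q i z) y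
        - gradient (fun z => (s.card : ℝ)⁻¹ * ∑ i ∈ s, Q i z) xs⟫ ≥ lam * ‖y - xs‖ ^ 2)
    (h0 : ∀ i ∈ s, gradient (Q i) xs = 0) :
    lam * s.card * ‖y - xs‖ ^ 2 ≤ ∑ i ∈ s, ⟪y - xs, gradient (Q i) y⟫ := by
  rw [gradient_const_mul_sum s (fun i hi => hd i hi y), gradient_const_mul_sum s
    (fun i hi => hd i hi xs), sum_congr rfl h0, sum_const_zero, smul_zero, sub_zero,
    real_inner_smul_right, inner_sum] at hsc
  rcases s.eq_empty_or_nonempty with rfl | hs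
  · simp
  calc lam * s.card * ‖y - xs‖ ^ 2 = s.card * (lam * ‖y - xs‖ ^ 2) := by ring
    _ ≤ s.card * ((s.card : ℝ)⁻¹ * ∑ i ∈ s, ⟪y - xs, gradient (Q i) y⟫) := by gcongr
    _ = ∑ i ∈ s, ⟪y - xs, gradient (Q i) y⟫ := mul_inv_cancel_left₀ (by positivity) _

theorem sum_inner_gradient_le {ι : Type*} [DecidableEq ι] {H F : Finset ι} {i : ι}
    (hi : i ∈ H) (hiF : i ∉ F) {Q : ι → E → ℝ} {mu : ℝ}
    (hlip : ∀ j ∈ H, ∀ x y, ‖gradient (Q j) x - gradient (Q j) y‖ ≤ mu * ‖x - y‖)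
    {x : ι → E} (hx : ∀ j ∈ H, gradient (Q j) (x j) = 0)
    {xs : E} (hxs : ∀ j ∈ H, gradient (Q j) xs = 0) :
    ∑ j ∈ H, ⟪x i - xs, gradient (Q j) (x i)⟫
      ≤ mu * ‖x i - xs‖ * ∑ j ∈ F ∩ H, ‖x i - x j‖
        + (H.erase i \ F).card * (mu * ‖x i - xs‖ ^ 2) := by
  rw [← sum_inter_add_sum_sdiff H F, ← add_sum_erase (H \ F) _ (mem_sdiff.2 ⟨hi, hiF⟩),
    hx i hi, inner_zero_right, zero_add, ← erase_sdiff_comm, inter_comm, mul_sum]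
  refine add_le_add ?_ ?_
  · refine sum_le_sum fun j hj => ?_
    exact real_inner_le_mul_norm_sub_of_lipschitz (hlip j (mem_of_mem_inter_right hj))
      (hx j (mem_of_mem_inter_right hj)) _ _
  · rw [← nsmul_eq_mul]
    refine sum_le_card_nsmul _ _ _ fun j hj => ?_
    have hjH : j ∈ H := mem_of_mem_erase (mem_sdiff.1 hj).1
    calc ⟪x i - xs, gradient (Q j) (x i)⟫ ≤ mu * ‖x i - xs‖ * ‖x i - xs‖ :=
          real_inner_le_mul_norm_sub_of_lipschitz (hlip j hjH) (hxs j hjH) _ _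
      _ = mu * ‖x i - xs‖ ^ 2 := by ring

theorem margin_mul_sq_le_sum_sq {ι : Type*} [DecidableEq ι] {n f : ℕ} {H F : Finset ι} {i : ι}
    (hi : i ∈ H) (hiF : i ∉ F) (hO : (H.erase i \ F).card ≤ f) (hA : (F ∩ H).card + f ≤ n)
    (hH : n ≤ H.card + f) {Q : ι → E → ℝ} (hdiff : ∀ j ∈ H, Differentiable ℝ (Q j))
    {lam mu : ℝ} (hlam : 0 ≤ lam) (hmu : 0 ≤ mu)
    (hlip : ∀ j ∈ H, ∀ x y, ‖gradient (Q j) x - gradient (Q j) y‖ ≤ mu * ‖x - y‖)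
    {x : ι → E} {xs : E}
    (hsc : ⟪x i - xs, gradient (fun z => (H.card : ℝ)⁻¹ * ∑ j ∈ H, Q j z) (x i)
        - gradient (fun z => (H.card : ℝ)⁻¹ * ∑ j ∈ H, Q j z) xs⟫ ≥ lam * ‖x i - xs‖ ^ 2)
    (hxs : ∀ j ∈ H, gradient (Q j) xs = 0) (hx : ∀ j ∈ H, gradient (Q j) (x j) = 0)
    (hmargin : 0 ≤ lam * (n - f) - mu * f) :
    ((lam * (n - f) - mu * f) * ‖x i - xs‖) ^ 2
      ≤ mu ^ 2 * (n - f) * ∑ j ∈ F ∩ H, ‖x i - x j‖ ^ 2 := by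
  have hsplit := (mul_card_mul_sq_le_sum_inner_gradient hdiff hsc hxs).trans
    (sum_inner_gradient_le hi hiF hlip hx hxs)
  have hO' : ((H.erase i \ F).card : ℝ) ≤ f := by exact_mod_cast hO
  have hA' : ((F ∩ H).card : ℝ) ≤ n - f := by
    rw [le_sub_iff_add_le]; exact_mod_cast hA
  have hH' : (n : ℝ) - f ≤ H.card := by
    rw [sub_le_iff_le_add]; exact_mod_cast hH
  have hMc : lam * (n - f) - mu * f ≤ lam * H.card - mu * (H.erase i \ F).card := by
    have := mul_le_mul_of_nonneg_left hH' hlam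
    have := mul_le_mul_of_nonneg_left hO' hmu
    linarith
  calc ((lam * (n - f) - mu * f) * ‖x i - xs‖) ^ 2
      ≤ (mu * ∑ j ∈ F ∩ H, ‖x i - x j‖) ^ 2 :=
        sq_mul_le_sq_of_mul_sq_le_mul hmargin hMc (norm_nonneg _) (by linarith)
    _ ≤ mu ^ 2 * ((F ∩ H).card * ∑ j ∈ F ∩ H, ‖x i - x j‖ ^ 2) := by
        rw [mul_pow]
        gcongr
        exact sq_sum_le_card_mul_sum_sq
    _ ≤ mu ^ 2 * (n - f) * ∑ j ∈ F ∩ H, ‖x i - x j‖ ^ 2 := by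
        rw [mul_assoc]
        gcongr

theorem phi_lower_bound {ι : Type*} [DecidableEq ι] {n f : ℕ} (hnf : f < n)
    {V H F : Finset ι} (hV : V.card = n) (hHV : H ⊆ V) (hH : n - f ≤ H.card) {i : ι}
    (hi : i ∈ H) (hFsub : F ⊆ V.erase i) (hFcard : F.card = n - f - 1)
    {Q : ι → E → ℝ} (hdiff : ∀ j ∈ H, Differentiable ℝ (Q j))
    {lam mu : ℝ} (hlam : 0 ≤ lam) (hmu : 0 ≤ mu)
    (hlip : ∀ j ∈ H, ∀ x y, ‖gradient (Q j) x - gradient (Q j) y‖ ≤ mu * ‖x - y‖)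
    {x : ι → E} {xs : E}
    (hsc : ⟪x i - xs, gradient (fun z => (H.card : ℝ)⁻¹ * ∑ j ∈ H, Q j z) (x i)
        - gradient (fun z => (H.card : ℝ)⁻¹ * ∑ j ∈ H, Q j z) xs⟫ ≥ lam * ‖x i - xs‖ ^ 2)
    (hxs : ∀ j ∈ H, gradient (Q j) xs = 0) (hx : ∀ j ∈ H, gradient (Q j) (x j) = 0)
    (hmargin : 0 ≤ lam * (n - f) - mu * f) {m : ι → E} (hm : ∀ j ∈ H.erase i, m j = x j)
    (hfilter : ∀ j ∈ F, ∀ k ∈ V.erase i \ F, ‖x i - m j‖ ≤ ‖x i - m k‖) :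
    ((lam * (n - f) - mu * f) ^ 2 / (2 * mu ^ 2 * (n - f)) - 2 * f + H.card / 2)
        * ‖x i - xs‖ ^ 2 - (∑ j ∈ H, ‖x j - xs‖ ^ 2) / 2
      ≤ ⟪x i - xs, ∑ j ∈ F, (x i - m j)⟫ := by
  have hiF : i ∉ F := fun h => (mem_erase.1 (hFsub h)).1 rfl
  have hAB := card_inter_add_card_sdiff F H
  have hAO := card_inter_add_card_erase_sdiff hi hiF
  have hBH := card_sdiff_add_card_le hHV (hFsub.trans (erase_subset i V))
  have hM := margin_mul_sq_le_sum_sq (n := n) (f := f) hi hiF (by omega) (by omega) (by omega)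
    hdiff hlam hmu hlip hsc hxs hx hmargin
  have hMdiv : (lam * (n - f) - mu * f) ^ 2 / (2 * mu ^ 2 * (n - f)) * ‖x i - xs‖ ^ 2
      ≤ (∑ j ∈ F ∩ H, ‖x i - x j‖ ^ 2) / 2 := by
    rw [div_mul_eq_mul_div, ← mul_pow]
    have : (f : ℝ) < n := by exact_mod_cast hnf
    exact div_le_of_le_mul₀ (by positivity) (by positivity) (by linarith)
  have honest : ∑ j ∈ F ∩ H, ⟪x i - xs, x i - m j⟫
      = ((F ∩ H).card * ‖x i - xs‖ ^ 2 + ∑ j ∈ F ∩ H, ‖x i - x j‖ ^ 2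
          - ∑ j ∈ F ∩ H, ‖x j - xs‖ ^ 2) / 2 := by
    have hmA : ∀ j ∈ F ∩ H, m j = x j := fun j hj =>
      hm j (mem_erase.2 ⟨ne_of_mem_of_not_mem (mem_inter.1 hj).1 hiF, (mem_inter.1 hj).2⟩)
    rw [sum_congr rfl fun j hj => by rw [hmA j hj, real_inner_sub_sub_eq], ← sum_div,
      sum_sub_distrib, sum_add_distrib, sum_const, nsmul_eq_mul]
  have faulty := neg_le_sum_inner_of_forall_norm_le (B := F \ H) (O := H.erase i \ F)
    (a := x i) (c := xs) (m := m) (x := x) (by omega) fun j hj k hk => by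
      rw [← hm k (mem_sdiff.1 hk).1]
      exact hfilter j (mem_sdiff.1 hj).1 k
        (sdiff_subset_sdiff (erase_subset_erase i hHV) le_rfl hk)
  have hradii : ∑ j ∈ F ∩ H, ‖x j - xs‖ ^ 2 + ∑ j ∈ H.erase i \ F, ‖x j - xs‖ ^ 2
      + ‖x i - xs‖ ^ 2 = ∑ j ∈ H, ‖x j - xs‖ ^ 2 := by
    rw [← sum_erase_add H _ hi, ← sum_inter_add_sum_sdiff (H.erase i) F, erase_inter_comm,
      erase_eq_of_notMem hiF, inter_comm]
  have hcoef : (H.card : ℝ) + 3 * (F \ H).card ≤ (F ∩ H).card + 1 + 4 * f := by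
    exact_mod_cast (by omega : H.card + 3 * (F \ H).card ≤ (F ∩ H).card + 1 + 4 * f)
  have := mul_le_mul_of_nonneg_right hcoef (sq_nonneg ‖x i - xs‖)
  rw [inner_sum, ← sum_inter_add_sum_sdiff F H, honest]
  linarith

end InnerProduct

theorem sum_phi_lower_bound_general {d n f : ℕ} {ι : Type*} [DecidableEq ι]
    (hnf : f < n) (V H : Finset ι) (hV : V.card = n) (hHV : H ⊆ V)
    (hH : n - f ≤ H.card)
    (Q : ι → EuclideanSpace ℝ (Fin d) → ℝ)
    (hdiff : ∀ i ∈ H, Differentiable ℝ (Q i))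
    (lam mu : ℝ) (hlam : 0 < lam) (hlammu : lam ≤ mu)
    (hlip : ∀ i ∈ H, ∀ x y : EuclideanSpace ℝ (Fin d),
      ‖gradient (Q i) x - gradient (Q i) y‖ ≤ mu * ‖x - y‖)
    (hsc : ∀ x y : EuclideanSpace ℝ (Fin d),
      ⟪x - y, gradient (fun z => (H.card : ℝ)⁻¹ * ∑ i ∈ H, Q i z) x
        - gradient (fun z => (H.card : ℝ)⁻¹ * ∑ i ∈ H, Q i z) y⟫
          ≥ lam * ‖x - y‖ ^ 2)
    (xs : EuclideanSpace ℝ (Fin d))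
    (hgrad0 : ∀ i ∈ H, gradient (Q i) xs = 0)
    (hmargin : lam * ((n : ℝ) - (f : ℝ)) - mu * (f : ℝ) > 0)
    (x : ι → EuclideanSpace ℝ (Fin d))
    (hxmin : ∀ i ∈ H, ∀ y, Q i (x i) ≤ Q i y)
    (m : ι → ι → EuclideanSpace ℝ (Fin d))
    (hm : ∀ i ∈ H, ∀ j ∈ H.erase i, m i j = x j)
    (F : ι → Finset ι)
    (hFsub : ∀ i ∈ H, F i ⊆ V.erase i)
    (hFcard : ∀ i ∈ H, (F i).card = n - f - 1)
    (hfilter : ∀ i ∈ H, ∀ j ∈ F i, ∀ k ∈ V.erase i \ F i,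
      ‖x i - m i j‖ ≤ ‖x i - m i k‖) :
    ∑ i ∈ H, ⟪x i - xs, ∑ j ∈ F i, (x i - m i j)⟫
      ≥ ((lam * ((n : ℝ) - (f : ℝ)) - mu * (f : ℝ)) ^ 2
            / (2 * mu ^ 2 * ((n : ℝ) - (f : ℝ))) - 2 * (f : ℝ))
          * ∑ i ∈ H, ‖x i - xs‖ ^ 2 := by
  have hmu : 0 ≤ mu := hlam.le.trans hlammu
  have hx : ∀ i ∈ H, gradient (Q i) (x i) = 0 := fun i hi =>
    IsLocalMin.gradient_eq_zero (.of_forall (hxmin i hi))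
  have hphi i (hi : i ∈ H) := phi_lower_bound hnf hV hHV hH hi (hFsub i hi) (hFcard i hi) hdiff
    hlam.le hmu hlip (hsc (x i) xs) hgrad0 hx hmargin.le (hm i hi) (hfilter i hi)
  rw [ge_iff_le]
  calc _ = ∑ i ∈ H, (((lam * (n - f) - mu * f) ^ 2 / (2 * mu ^ 2 * (n - f)) - 2 * f + H.card / 2)
          * ‖x i - xs‖ ^ 2 - (∑ j ∈ H, ‖x j - xs‖ ^ 2) / 2) := by
        rw [sum_sub_distrib, ← mul_sum, sum_const, nsmul_eq_mul]
        ring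
    _ ≤ ∑ i ∈ H, ⟪x i - xs, ∑ j ∈ F i, (x i - m i j)⟫ := sum_le_sum hphi

/-- Part I of the proof of Theorem 1: the aggregate inner-product
term `Σ_{i∈H} φ_i` is bounded below by `β · Σ_{i∈H} ‖x_i − x*‖²`, where
`β = (λ(n−f) − μf)² / (2μ²(n−f)) − 2f`. -/
theorem sum_phi_lower_bound {d n f : ℕ} {ι : Type*} [DecidableEq ι]
    (hnf : f < n) (V H : Finset ι) (hV : V.card = n) (hHV : H ⊆ V)
    (hH : n - f ≤ H.card)
    (Q : ι → EuclideanSpace ℝ (Fin d) → ℝ)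
    (hconv : ∀ i ∈ H, ConvexOn ℝ Set.univ (Q i))
    (hdiff : ∀ i ∈ H, Differentiable ℝ (Q i))
    (lam mu : ℝ) (hlam : 0 < lam) (hlammu : lam ≤ mu)
    (hlip : ∀ i ∈ H, ∀ x y : EuclideanSpace ℝ (Fin d),
      ‖gradient (Q i) x - gradient (Q i) y‖ ≤ mu * ‖x - y‖)
    (hsc : ∀ x y : EuclideanSpace ℝ (Fin d),
      ⟪x - y, gradient (fun z => (H.card : ℝ)⁻¹ * ∑ i ∈ H, Q i z) x
        - gradient (fun z => (H.card : ℝ)⁻¹ * ∑ i ∈ H, Q i z) y⟫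
          ≥ lam * ‖x - y‖ ^ 2)
    (xs : EuclideanSpace ℝ (Fin d))
    (hgrad0 : ∀ i ∈ H, gradient (Q i) xs = 0)
    (hmargin : lam * ((n : ℝ) - (f : ℝ)) - mu * (f : ℝ) > 0)
    (x : ι → EuclideanSpace ℝ (Fin d))
    (hxmin : ∀ i ∈ H, ∀ y, Q i (x i) ≤ Q i y)
    (m : ι → ι → EuclideanSpace ℝ (Fin d))
    (hm : ∀ i ∈ H, ∀ j ∈ H.erase i, m i j = x j)
    (F : ι → Finset ι)
    (hFsub : ∀ i ∈ H, F i ⊆ V.erase i)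
    (hFcard : ∀ i ∈ H, (F i).card = n - f - 1)
    (hfilter : ∀ i ∈ H, ∀ j ∈ F i, ∀ k ∈ V.erase i \ F i,
      ‖x i - m i j‖ ≤ ‖x i - m i k‖) :
    ∑ i ∈ H, ⟪x i - xs, ∑ j ∈ F i, (x i - m i j)⟫
      ≥ ((lam * ((n : ℝ) - (f : ℝ)) - mu * (f : ℝ)) ^ 2
            / (2 * mu ^ 2 * ((n : ℝ) - (f : ℝ))) - 2 * (f : ℝ))
          * ∑ i ∈ H, ‖x i - xs‖ ^ 2 :=
  sum_phi_lower_bound_general hnf V H hV hHV hH Q hdiff lam mu hlam hlammu hlip hsc xs hgrad0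
    hmargin x hxmin m hm F hFsub hFcard hfilter
end

section
/- Let n > f ≥ 0 be integers, V a set of n agents, and H ⊆ V. Suppose for each i ∈ H we are given a point x_i ∈ ℝ^d, vectors m(i,j) ∈ ℝ^d for j ∈ V∖{i} with m(i,j) = x_j for j ∈ H∖{i}, and a set F_i ⊆ V∖{i} with |F_i| = n − f − 1 such that: ‖x_i − m(i,j)‖ ≤ ‖x_i − m(i,k)‖ for all j ∈ F_i and k ∈ (V∖{i})∖F_i, and |(V∖{i}) ∖ H| ≤ f. Then for every x* ∈ ℝ^d: Σ_{i∈H} ‖Σ_{j∈F_i} (x_i − m(i,j))‖² ≤ 4|H|³ · Σ_{i∈H} ‖x_i − x*‖². -/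
open Finset

/-!
Every honest agent lies within `√V` of `x*`, so any two honest agents are at distance at most
`2√V`. For an honest `i`, the filter keeps `n - f - 1` of the `n - 1` messages, so at most `f` are
discarded while at most `f` senders are faulty; hence a kept faulty message is no farther from
`x i` than some discarded honest one. Every kept direction thus has norm at most `2√V`, and
there are at most `|H|` of them, so each `‖∑ j ∈ F i, (x i - m i j)‖² ≤ 4|H|²V`.
-/

section Counting

variable {ι : Type*} [DecidableEq ι] {A F H : Finset ι}

theorem card_le_card_of_card_sdiff_add_card_le (h : #(A \ H) + #F ≤ #A) : #F ≤ #H := by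
  have := card_sdiff_add_card_inter A H
  have := card_le_card (inter_subset_right : A ∩ H ⊆ H)
  omega

theorem exists_mem_sdiff_mem_of_card_sdiff_add_card_le (h : #(A \ H) + #F ≤ #A) (hFA : F ⊆ A)
    {j : ι} (hjF : j ∈ F) (hjH : j ∉ H) : ∃ k ∈ A \ F, k ∈ H := by
  by_contra! hnone
  have hsub : A \ F ⊆ (A \ H).erase j := fun k hk ↦ by
    obtain ⟨hkA, hkF⟩ := mem_sdiff.mp hk
    exact mem_erase.mpr
      ⟨(ne_of_mem_of_not_mem hjF hkF).symm, mem_sdiff.mpr ⟨hkA, hnone k hk⟩⟩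
  have hjAH : j ∈ A \ H := mem_sdiff.mpr ⟨hFA hjF, hjH⟩
  have := (card_le_card hsub).trans_lt (card_lt_card (erase_ssubset hjAH))
  rw [card_sdiff_of_subset hFA] at this
  have := card_le_card hFA
  omega

theorem le_of_forall_mem_inter_le {α : Type*} [Preorder α] {w : ι → α} {r : α}
    (h : #(A \ H) + #F ≤ #A) (hFA : F ⊆ A) (hfilter : ∀ j ∈ F, ∀ k ∈ A \ F, w j ≤ w k)
    (hH : ∀ k ∈ A ∩ H, w k ≤ r) : ∀ j ∈ F, w j ≤ r := by
  intro j hjF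
  by_cases hjH : j ∈ H
  · exact hH j (mem_inter.mpr ⟨hFA hjF, hjH⟩)
  · obtain ⟨k, hk, hkH⟩ := exists_mem_sdiff_mem_of_card_sdiff_add_card_le h hFA hjF hjH
    exact (hfilter j hjF k hk).trans (hH k (mem_inter.mpr ⟨(mem_sdiff.mp hk).1, hkH⟩))

end Counting

section Norms

variable {ι E : Type*} [SeminormedAddCommGroup E] {s : Finset ι}

theorem norm_le_sqrt_sum_sq (g : ι → E) {k : ι} (hk : k ∈ s) :
    ‖g k‖ ≤ √(∑ l ∈ s, ‖g l‖ ^ 2) := by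
  simpa using Real.abs_le_sqrt (single_le_sum (f := fun l ↦ ‖g l‖ ^ 2)
    (fun _ _ ↦ sq_nonneg _) hk)

theorem norm_sub_le_two_mul_sqrt_sum_sq (x : ι → E) (c : E) {i k : ι} (hi : i ∈ s)
    (hk : k ∈ s) :
    ‖x i - x k‖ ≤ 2 * √(∑ l ∈ s, ‖x l - c‖ ^ 2) := by
  have hi' := norm_le_sqrt_sum_sq (fun l ↦ x l - c) hi
  have hk' := norm_le_sqrt_sum_sq (fun l ↦ x l - c) hk
  have := norm_sub_le_norm_sub_add_norm_sub (x i) c (x k)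
  rw [norm_sub_rev c] at this
  linarith

theorem sq_norm_sum_le_of_norm_le {N : ℕ} {g : ι → E} {r : ℝ} (hs : #s ≤ N)
    (hg : ∀ j ∈ s, ‖g j‖ ≤ r) : ‖∑ j ∈ s, g j‖ ^ 2 ≤ (N * r) ^ 2 := by
  rcases s.eq_empty_or_nonempty with rfl | ⟨j, hj⟩
  · simpa using sq_nonneg _
  have hsum : ‖∑ j ∈ s, g j‖ ≤ #s * r := by simpa [sum_const] using norm_sum_le_of_le s hg
  have hle : (#s : ℝ) * r ≤ N * r :=
    mul_le_mul_of_nonneg_right (by exact_mod_cast hs) ((norm_nonneg _).trans (hg j hj))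
  exact pow_le_pow_left₀ (norm_nonneg _) (hsum.trans hle) 2

end Norms

theorem sum_psi_upper_bound_general {d n f : ℕ} {ι : Type*} [DecidableEq ι]
    (V H : Finset ι) (hV : V.card = n)
    (x : ι → EuclideanSpace ℝ (Fin d))
    (m : ι → ι → EuclideanSpace ℝ (Fin d))
    (hm : ∀ i ∈ H, ∀ j ∈ H.erase i, m i j = x j)
    (F : ι → Finset ι)
    (hFsub : ∀ i ∈ H, F i ⊆ V.erase i)
    (hFcard : ∀ i ∈ H, (F i).card = n - f - 1)
    (hfilter : ∀ i ∈ H, ∀ j ∈ F i, ∀ k ∈ V.erase i \ F i,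
      ‖x i - m i j‖ ≤ ‖x i - m i k‖)
    (hfaulty : ∀ i ∈ H, (V.erase i \ H).card ≤ f) :
    ∀ xs : EuclideanSpace ℝ (Fin d),
      ∑ i ∈ H, ‖∑ j ∈ F i, (x i - m i j)‖ ^ 2
        ≤ 4 * (H.card : ℝ) ^ 3 * ∑ i ∈ H, ‖x i - xs‖ ^ 2 := by
  intro xs
  set R := √(∑ i ∈ H, ‖x i - xs‖ ^ 2) with hR
  have hcard : ∀ i ∈ H, #(V.erase i \ H) + #(F i) ≤ #(V.erase i) := fun i hi ↦ by
    have hA : n - 1 ≤ #(V.erase i) := hV ▸ pred_card_le_card_erase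
    have hAH : #(V.erase i \ H) ≤ #(V.erase i) := card_le_card sdiff_subset
    have := hfaulty i hi
    have := hFcard i hi
    omega
  have hkept : ∀ i ∈ H, ∀ j ∈ F i, ‖x i - m i j‖ ≤ 2 * R := fun i hi ↦
    le_of_forall_mem_inter_le (hcard i hi) (hFsub i hi) (hfilter i hi) fun k hk ↦ by
      obtain ⟨hkV, hkH⟩ := mem_inter.mp hk
      rw [hm i hi k (mem_erase.mpr ⟨ne_of_mem_erase hkV, hkH⟩)]
      exact norm_sub_le_two_mul_sqrt_sum_sq x xs hi hkH
  calc ∑ i ∈ H, ‖∑ j ∈ F i, (x i - m i j)‖ ^ 2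
      ≤ ∑ _i ∈ H, ((#H : ℝ) * (2 * R)) ^ 2 := sum_le_sum fun i hi ↦
        sq_norm_sum_le_of_norm_le (card_le_card_of_card_sdiff_add_card_le (hcard i hi))
          (hkept i hi)
    _ = 4 * (#H : ℝ) ^ 3 * R ^ 2 := by rw [sum_const, nsmul_eq_mul]; ring
    _ = 4 * (#H : ℝ) ^ 3 * ∑ i ∈ H, ‖x i - xs‖ ^ 2 := by
        rw [hR, Real.sq_sqrt (sum_nonneg fun _ _ ↦ sq_nonneg _)]

/-- Part II of the proof of Theorem 1: the aggregate squared norm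
of the filtered update directions is at most `4|H|³ · Σ_{i∈H} ‖x_i − x*‖²`. -/
theorem sum_psi_upper_bound {d n f : ℕ} {ι : Type*} [DecidableEq ι]
    (hnf : f < n) (V H : Finset ι) (hV : V.card = n) (hHV : H ⊆ V)
    (x : ι → EuclideanSpace ℝ (Fin d))
    (m : ι → ι → EuclideanSpace ℝ (Fin d))
    (hm : ∀ i ∈ H, ∀ j ∈ H.erase i, m i j = x j)
    (F : ι → Finset ι)
    (hFsub : ∀ i ∈ H, F i ⊆ V.erase i)
    (hFcard : ∀ i ∈ H, (F i).card = n - f - 1)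
    (hfilter : ∀ i ∈ H, ∀ j ∈ F i, ∀ k ∈ V.erase i \ F i,
      ‖x i - m i j‖ ≤ ‖x i - m i k‖)
    (hfaulty : ∀ i ∈ H, (V.erase i \ H).card ≤ f) :
    ∀ xs : EuclideanSpace ℝ (Fin d),
      ∑ i ∈ H, ‖∑ j ∈ F i, (x i - m i j)‖ ^ 2
        ≤ 4 * (H.card : ℝ) ^ 3 * ∑ i ∈ H, ‖x i - xs‖ ^ 2 :=
  sum_psi_upper_bound_general V H hV x m hm F hFsub hFcard hfilter hfaulty
end

section
/- Let n > f ≥ 0 be integers, let A be a finite set with |A| = n − 1, let H' ⊆ A with |A ∖ H'| ≤ f, let x ∈ ℝ^d, let m : A → ℝ^d, and let F ⊆ A with |F| = n − f − 1 be such that ‖x − m(j)‖ ≤ ‖x − m(k)‖ for all j ∈ F and k ∈ A ∖ F. Then ‖Σ_{j∈F} (x − m(j))‖ ≤ Σ_{j∈H'} ‖x − m(j)‖. -/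
open Finset

/-!
Write `g j = ‖x - m j‖`. Split `F` and `H'` along their intersection: every value of `g` on `F \ H'`
is at most every value on `H' \ F ⊆ A \ F`, and `F \ H'` has no more elements than `H' \ F` because
`|F| = n - f - 1 ≤ |A| - |A \ H'| = |H'|`. Hence `∑_F g ≤ ∑_H' g`, and the triangle inequality finishes.
-/

namespace Finset

variable {ι M : Type*} [AddCommMonoid M] [LinearOrder M] [IsOrderedAddMonoid M]

theorem sum_le_sum_of_forall_le_of_card_le {s t : Finset ι} {g : ι → M}
    (hle : ∀ i ∈ s, ∀ j ∈ t, g i ≤ g j) (hcard : s.card ≤ t.card) (hg : ∀ j ∈ t, 0 ≤ g j) :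
    ∑ i ∈ s, g i ≤ ∑ j ∈ t, g j := by
  rcases t.eq_empty_or_nonempty with rfl | ht
  · simp [card_eq_zero.mp (Nat.le_zero.mp hcard)]
  obtain ⟨k, hk, hkmin⟩ := t.exists_min_image g ht
  calc ∑ i ∈ s, g i ≤ s.card • g k := sum_le_card_nsmul s g _ fun i hi => hle i hi k hk
    _ ≤ t.card • g k := nsmul_le_nsmul_left (hg k hk) hcard
    _ ≤ ∑ j ∈ t, g j := card_nsmul_le_sum t g _ hkmin

theorem sum_le_sum_of_forall_le_sdiff [DecidableEq ι] {A F H : Finset ι} {g : ι → M}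
    (hHA : H ⊆ A) (hcard : F.card ≤ H.card) (hg : ∀ j ∈ H, 0 ≤ g j)
    (hle : ∀ j ∈ F, ∀ k ∈ A \ F, g j ≤ g k) :
    ∑ j ∈ F, g j ≤ ∑ j ∈ H, g j := by
  have hsdiff : ∑ j ∈ F \ H, g j ≤ ∑ j ∈ H \ F, g j := by
    refine sum_le_sum_of_forall_le_of_card_le (fun i hi j hj => ?_)
      (card_sdiff_le_card_sdiff_iff.mpr hcard) (fun j hj => hg j (mem_sdiff.mp hj).1)
    exact hle i (mem_sdiff.mp hi).1 j (sdiff_subset_sdiff hHA le_rfl hj)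
  rw [← sum_inter_add_sum_sdiff F H, ← sum_inter_add_sum_sdiff H F, inter_comm]
  exact add_le_add_right hsdiff _

end Finset

theorem filtered_sum_norm_le_general {d n f : ℕ} {ι : Type*} [DecidableEq ι]
    (A H' F : Finset ι) (hA : A.card = n - 1)
    (hH'A : H' ⊆ A) (hfaulty : (A \ H').card ≤ f)
    (x : EuclideanSpace ℝ (Fin d)) (m : ι → EuclideanSpace ℝ (Fin d))
    (hFcard : F.card = n - f - 1)
    (hfilter : ∀ j ∈ F, ∀ k ∈ A \ F, ‖x - m j‖ ≤ ‖x - m k‖) :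
    ‖∑ j ∈ F, (x - m j)‖ ≤ ∑ j ∈ H', ‖x - m j‖ := by
  have hcard : F.card ≤ H'.card := by
    have := card_sdiff_add_card_eq_card hH'A
    omega
  calc ‖∑ j ∈ F, (x - m j)‖ ≤ ∑ j ∈ F, ‖x - m j‖ := norm_sum_le _ _
    _ ≤ ∑ j ∈ H', ‖x - m j‖ :=
      sum_le_sum_of_forall_le_sdiff hH'A hcard (fun _ _ => norm_nonneg _) hfilter

/-- inequality (47): the norm of the filtered update direction is
dominated by the sum of distances to the non-faulty estimates. -/
theorem filtered_sum_norm_le {d n f : ℕ} {ι : Type*} [DecidableEq ι]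
    (hnf : f < n)
    (A H' F : Finset ι) (hA : A.card = n - 1)
    (hH'A : H' ⊆ A) (hfaulty : (A \ H').card ≤ f)
    (x : EuclideanSpace ℝ (Fin d)) (m : ι → EuclideanSpace ℝ (Fin d))
    (hFA : F ⊆ A) (hFcard : F.card = n - f - 1)
    (hfilter : ∀ j ∈ F, ∀ k ∈ A \ F, ‖x - m j‖ ≤ ‖x - m k‖) :
    ‖∑ j ∈ F, (x - m j)‖ ≤ ∑ j ∈ H', ‖x - m j‖ :=
  filtered_sum_norm_le_general A H' F hA hH'A hfaulty x m hFcard hfilter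
end

section
/- Let μ, λ be positive reals and n > f ≥ 0 integers with n − f > 0. Define α = (1 − √(1 + λ/μ))² − f/(n−f) and β = (λ(n−f) − μf)² / (2μ²(n−f)) − 2f. Then β = α · (α/2 + 2√(1 + λ/μ)) · (n − f). In particular, if α > 0 then β > 0. -/
/-!
Put `s = √(1 + λ/μ)` and `m = n − f`, so that `λ/μ = s² − 1`. Then `α + 2s = 1 + s² − f/m`, hence
`α (α/2 + 2s) = ((1 + s² − f/m)² − 4s²)/2`, while `β/m = (s² − 1 − f/m)²/2 − 2f/m`; the two agree
because `(x + 1)² − (x − 1)² = 4x` with `x = s² − f/m`. Since `s ≥ 0`, `α > 0` makes every factor positive.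
-/

theorem sq_sub_div_sub_eq_of_sq_eq {mu lam f m s : ℝ} (hmu : mu ≠ 0) (hm : m ≠ 0)
    (hs : s ^ 2 = 1 + lam / mu) :
    (lam * m - mu * f) ^ 2 / (2 * mu ^ 2 * m) - 2 * f
      = ((1 - s) ^ 2 - f / m) * (((1 - s) ^ 2 - f / m) / 2 + 2 * s) * m := by
  have hlam : lam = mu * (s ^ 2 - 1) := by
    rw [hs]
    field_simp
    ring
  subst hlam
  field_simp
  ring

/-- equation (58): the identity
`β = α (α/2 + 2√(1 + λ/μ)) (n − f)` between the contraction coefficient `β`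
and the fault-tolerance margin `α`; in particular `α > 0` implies `β > 0`. -/
theorem beta_eq_alpha_formula (mu lam : ℝ) (hmu : 0 < mu) (hlam : 0 < lam)
    (n f : ℕ) (hnf : f < n) :
    ((lam * ((n : ℝ) - (f : ℝ)) - mu * (f : ℝ)) ^ 2
        / (2 * mu ^ 2 * ((n : ℝ) - (f : ℝ))) - 2 * (f : ℝ))
      = ((1 - Real.sqrt (1 + lam / mu)) ^ 2 - (f : ℝ) / ((n : ℝ) - (f : ℝ)))
        * (((1 - Real.sqrt (1 + lam / mu)) ^ 2 - (f : ℝ) / ((n : ℝ) - (f : ℝ))) / 2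
            + 2 * Real.sqrt (1 + lam / mu))
        * ((n : ℝ) - (f : ℝ))
    ∧ ((1 - Real.sqrt (1 + lam / mu)) ^ 2 - (f : ℝ) / ((n : ℝ) - (f : ℝ)) > 0 →
        (lam * ((n : ℝ) - (f : ℝ)) - mu * (f : ℝ)) ^ 2
          / (2 * mu ^ 2 * ((n : ℝ) - (f : ℝ))) - 2 * (f : ℝ) > 0) := by
  have hm : (0 : ℝ) < n - f := sub_pos.mpr (Nat.cast_lt.mpr hnf)
  have key := sq_sub_div_sub_eq_of_sq_eq (f := f) hmu.ne' hm.ne'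
    (Real.sq_sqrt (by positivity : (0 : ℝ) ≤ 1 + lam / mu))
  exact ⟨key, fun hα => key ▸ by positivity⟩
end
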